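/- arXiv:2602.05294 — 5 statements merged into one kernel-verified Lean document; each statement's English description precedes it below -/
import Mathlib

section
/- Suppose a volume allocation satisfies the partition of unity property and the screening property: for every perfect configuration X̄ and every admissible X, if x ∈ X lies in a region where X coincides with X̄ on a sufficiently thick neighborhood, then φ_x(·|X) = φ_x(·|X̄) λ-a.e. Then for every bounded ℱ-measurable region Λ, every perfect configuration X̄, and every admissible configuration X coinciding with X̄ on ∂_F Λ ∪ Λ^c, the total allocated volumes agree: ∑_{x ∈ X_Λ} v(x|X) = ∑_{x ∈ X̄_Λ} v(x|X̄). -/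
open MeasureTheory Filter
open scoped ENNReal

/-- Allocation screening. If the allocation satisfies partition of
unity and the screening property (agreement of the configurations on an
r-neighborhood of a particle forces equality of its allocation functions), then
for any bounded region Λ, a perfect configuration X̄, and an admissible X
coinciding with X̄ on ∂_F Λ ∪ Λᶜ (the boundary layer of Λ together with the
exterior), the total allocated volumes over Λ agree. -/
theorem stmt_3
    {V P : Type*} [PseudoMetricSpace V]
    {S : Type*} [MeasurableSpace S] (lam : Measure S)
    (pos : P → V)
    (X Xbar : Set P) [Countable X] [Countable Xbar]
    (phi phibar : P → S → ℝ≥0∞)                    -- φ_·(·|X) and φ_·(·|X̄)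
    (hmeas : ∀ x, Measurable (phi x)) (hmeasbar : ∀ x, Measurable (phibar x))
    (r : ℝ) (hr : 0 < r)                           -- thickness of the boundary layer
    (Lam : Set V) (hbdd : Bornology.IsBounded Lam) -- bounded region Λ
    -- X coincides with X̄ on ∂_F Λ ∪ Λᶜ:
    (hagree : {x ∈ X | pos x ∉ Lam ∨ ∃ w ∉ Lam, dist (pos x) w ≤ r}
            = {x ∈ Xbar | pos x ∉ Lam ∨ ∃ w ∉ Lam, dist (pos x) w ≤ r})
    -- screening: agreement on a sufficiently thick neighborhood of x forces
    -- equality of the allocation functions λ-a.e.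
    (hscr : ∀ x ∈ X,
      ({y ∈ X | dist (pos y) (pos x) ≤ r} = {y ∈ Xbar | dist (pos y) (pos x) ≤ r}) →
      phi x =ᵐ[lam] phibar x)
    -- partition of unity for both configurations
    (hpart : ∀ᵐ s ∂lam, ∑' x : X, phi (x : P) s = 1)
    (hpartbar : ∀ᵐ s ∂lam, ∑' x : Xbar, phibar (x : P) s = 1) :
    ∑' x : {x : P // x ∈ X ∧ pos x ∈ Lam}, ∫⁻ s, phi (x : P) s ∂lam
      = ∑' x : {x : P // x ∈ Xbar ∧ pos x ∈ Lam}, ∫⁻ s, phibar (x : P) s ∂lam := by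
  classical
  set XinS : Set P := {x : P | x ∈ X ∧ pos x ∈ Lam} with hXinS
  set XinSbar : Set P := {x : P | x ∈ Xbar ∧ pos x ∈ Lam} with hXinSbar
  set XoutS : Set P := {x : P | x ∈ X ∧ pos x ∉ Lam} with hXoutS
  -- The outside sets coincide.
  have hOut : {x : P | x ∈ Xbar ∧ pos x ∉ Lam} = XoutS := by
    ext x
    simp only [hXoutS, Set.mem_setOf_eq]
    constructor
    · rintro ⟨hx, hn⟩
      have hmem : x ∈ {x ∈ X | pos x ∉ Lam ∨ ∃ w ∉ Lam, dist (pos x) w ≤ r} := by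
        rw [hagree]; exact ⟨hx, Or.inl hn⟩
      exact ⟨hmem.1, hn⟩
    · rintro ⟨hx, hn⟩
      have hmem : x ∈ {x ∈ Xbar | pos x ∉ Lam ∨ ∃ w ∉ Lam, dist (pos x) w ≤ r} := by
        rw [← hagree]; exact ⟨hx, Or.inl hn⟩
      exact ⟨hmem.1, hn⟩
  -- Outside particles have equal allocation functions a.e.
  have hae : ∀ x : P, x ∈ X → pos x ∉ Lam → phi x =ᵐ[lam] phibar x := by
    intro x hx hn
    apply hscr x hx
    ext y
    simp only [Set.mem_setOf_eq]
    constructor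
    · rintro ⟨hy, hd⟩
      have hmem : y ∈ {z ∈ X | pos z ∉ Lam ∨ ∃ w ∉ Lam, dist (pos z) w ≤ r} := by
        refine ⟨hy, ?_⟩
        by_cases h : pos y ∈ Lam
        · exact Or.inr ⟨pos x, hn, hd⟩
        · exact Or.inl h
      rw [hagree] at hmem
      exact ⟨hmem.1, hd⟩
    · rintro ⟨hy, hd⟩
      have hmem : y ∈ {z ∈ Xbar | pos z ∉ Lam ∨ ∃ w ∉ Lam, dist (pos z) w ≤ r} := by
        refine ⟨hy, ?_⟩
        by_cases h : pos y ∈ Lam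
        · exact Or.inr ⟨pos x, hn, hd⟩
        · exact Or.inl h
      rw [← hagree] at hmem
      exact ⟨hmem.1, hd⟩
  -- Countability
  have hXc : (X : Set P).Countable := Set.countable_coe_iff.mp ‹_›
  have hXbarc : (Xbar : Set P).Countable := Set.countable_coe_iff.mp ‹_›
  haveI : Countable ↥XinS := (hXc.mono (fun x hx => hx.1)).to_subtype
  haveI : Countable ↥XinSbar := (hXbarc.mono (fun x hx => hx.1)).to_subtype
  haveI : Countable ↥XoutS := (hXc.mono (fun x hx => hx.1)).to_subtype
  -- Splitting lemma for both configurations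
  have hsplit : ∀ f : P → ℝ≥0∞,
      ∑' x : X, f (x : P) = (∑' x : ↥XinS, f (x : P)) + ∑' x : ↥XoutS, f (x : P) := by
    intro f
    rw [tsum_subtype, tsum_subtype, tsum_subtype, ← ENNReal.tsum_add]
    refine tsum_congr fun x => ?_
    by_cases hx : x ∈ X
    · by_cases hl : pos x ∈ Lam
      · rw [Set.indicator_of_mem hx, Set.indicator_of_mem (show x ∈ XinS from ⟨hx, hl⟩),
          Set.indicator_of_notMem (show x ∉ XoutS from fun h => h.2 hl), add_zero]
      · rw [Set.indicator_of_mem hx, Set.indicator_of_mem (show x ∈ XoutS from ⟨hx, hl⟩),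
          Set.indicator_of_notMem (show x ∉ XinS from fun h => hl h.2), zero_add]
    · rw [Set.indicator_of_notMem hx,
        Set.indicator_of_notMem (show x ∉ XinS from fun h => hx h.1),
        Set.indicator_of_notMem (show x ∉ XoutS from fun h => hx h.1), add_zero]
  have hsplitbar : ∀ f : P → ℝ≥0∞,
      ∑' x : Xbar, f (x : P) = (∑' x : ↥XinSbar, f (x : P)) + ∑' x : ↥XoutS, f (x : P) := by
    intro f
    rw [tsum_subtype, tsum_subtype, tsum_subtype, ← ENNReal.tsum_add]
    refine tsum_congr fun x => ?_
    by_cases hx : x ∈ Xbar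
    · by_cases hl : pos x ∈ Lam
      · rw [Set.indicator_of_mem hx, Set.indicator_of_mem (show x ∈ XinSbar from ⟨hx, hl⟩),
          Set.indicator_of_notMem (show x ∉ XoutS from ?_), add_zero]
        intro h
        have : x ∈ {x : P | x ∈ Xbar ∧ pos x ∉ Lam} := by rw [hOut]; exact h
        exact this.2 hl
      · rw [Set.indicator_of_mem hx,
          Set.indicator_of_mem (show x ∈ XoutS from by rw [← hOut]; exact ⟨hx, hl⟩),
          Set.indicator_of_notMem (show x ∉ XinSbar from fun h => hl h.2), zero_add]
    · rw [Set.indicator_of_notMem hx,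
        Set.indicator_of_notMem (show x ∉ XinSbar from fun h => hx h.1),
        Set.indicator_of_notMem (show x ∉ XoutS from ?_), add_zero]
      intro h
      have : x ∈ {x : P | x ∈ Xbar ∧ pos x ∉ Lam} := by rw [hOut]; exact h
      exact hx this.1
  -- The outside sums agree a.e.
  have houtae : ∀ᵐ s ∂lam, ∑' x : ↥XoutS, phi (x : P) s = ∑' x : ↥XoutS, phibar (x : P) s := by
    have h : ∀ᵐ s ∂lam, ∀ x : ↥XoutS, phi (x : P) s = phibar (x : P) s :=
      eventually_countable_forall.mpr fun x => hae x x.2.1 x.2.2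
    filter_upwards [h] with s hs
    exact tsum_congr fun x => hs x
  -- Pointwise a.e. equality of the inside sums
  have key : ∀ᵐ s ∂lam, ∑' x : ↥XinS, phi (x : P) s = ∑' x : ↥XinSbar, phibar (x : P) s := by
    filter_upwards [hpart, hpartbar, houtae] with s h1 h2 h3
    rw [hsplit (fun p => phi p s)] at h1
    rw [hsplitbar (fun p => phibar p s)] at h2
    rw [← h3] at h2
    have hc : (∑' x : ↥XoutS, phi (x : P) s) ≠ ⊤ := by
      intro htop
      rw [htop, add_top] at h1
      exact (by simp : (⊤ : ℝ≥0∞) ≠ 1) h1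
    exact WithTop.add_right_cancel hc (h1.trans h2.symm)
  -- Conclude by integrating
  have hL : ∑' x : ↥XinS, ∫⁻ s, phi (x : P) s ∂lam = ∫⁻ s, ∑' x : ↥XinS, phi (x : P) s ∂lam :=
    (lintegral_tsum fun x : ↥XinS => (hmeas (x : P)).aemeasurable).symm
  have hR : ∑' x : ↥XinSbar, ∫⁻ s, phibar (x : P) s ∂lam
      = ∫⁻ s, ∑' x : ↥XinSbar, phibar (x : P) s ∂lam :=
    (lintegral_tsum fun x : ↥XinSbar => (hmeasbar (x : P)).aemeasurable).symm
  calc ∑' x : {x : P // x ∈ X ∧ pos x ∈ Lam}, ∫⁻ s, phi (x : P) s ∂lam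
      = ∫⁻ s, ∑' x : ↥XinS, phi (x : P) s ∂lam := hL
    _ = ∫⁻ s, ∑' x : ↥XinSbar, phibar (x : P) s ∂lam := lintegral_congr_ae key
    _ = ∑' x : {x : P // x ∈ Xbar ∧ pos x ∈ Lam}, ∫⁻ s, phibar (x : P) s ∂lam := hR.symm
end

section
/- Under the local optimization assumption (p⋆·v(x|X) ≥ μ_x for all admissible X and x ∈ X) and the allocation screening property, every perfect configuration X̄ is a ground state: for every bounded Λ ⊂ 𝔾 and every admissible configuration X coinciding with X̄ on Λ^c, the energy difference satisfies H(X_Λ | X̄_{Λ^c}) − H(X̄_Λ | X̄_{Λ^c}) ≥ 0, where H(X_Λ|·) = −∑_{x ∈ X_Λ'} μ_x over a suitable ℱ-measurable enlargement Λ' of Λ. -/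
open scoped BigOperators

/-- Under local optimization (p⋆·v(x|X) ≥ μ_x), perfectness of X̄
(p⋆·v(x|X̄) = μ_x), and allocation screening (equality of total allocated
volumes over the ℱ-measurable enlargement Λ' of Λ), every perfect configuration
is a ground state: the energy difference
H(X_Λ | X̄_{Λᶜ}) − H(X̄_Λ | X̄_{Λᶜ}) = −∑_{x∈X_{Λ'}} μ_x + ∑_{x∈X̄_{Λ'}} μ_x
is nonnegative. -/
theorem stmt_5
    {P G : Type*} (pos : P → G)
    (X Xbar : Set P)                                  -- X and the perfect X̄
    (Lam : Set G) (hLamfin : Lam.Finite)              -- bounded Λ ⊂ 𝔾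
    (Lam' : Set G) (hLL : Lam ⊆ Lam') (hLam'fin : Lam'.Finite)  -- enlargement [Λ]
    -- X coincides with X̄ on Λᶜ:
    (hagree : {x ∈ X | pos x ∉ Lam} = {x ∈ Xbar | pos x ∉ Lam})
    (v vbar : P → ℝ)                                  -- v(x|X) and v(x|X̄)
    (mu : P → ℝ) (hmupos : ∀ x, 0 < mu x)
    (pstar : ℝ) (hpstar : 0 < pstar)
    (hfinX : {x ∈ X | pos x ∈ Lam'}.Finite)
    (hfinXbar : {x ∈ Xbar | pos x ∈ Lam'}.Finite)
    -- local optimization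
    (hopt : ∀ x ∈ X, mu x ≤ pstar * v x)
    -- X̄ is perfect
    (hperf : ∀ x ∈ Xbar, pstar * vbar x = mu x)
    -- screening: total allocated volumes over [Λ] agree
    (hscr : ∑ᶠ x ∈ {x ∈ X | pos x ∈ Lam'}, v x = ∑ᶠ x ∈ {x ∈ Xbar | pos x ∈ Lam'}, vbar x) :
    0 ≤ (-∑ᶠ x ∈ {x ∈ X | pos x ∈ Lam'}, mu x) - (-∑ᶠ x ∈ {x ∈ Xbar | pos x ∈ Lam'}, mu x) := by
  rw [finsum_mem_eq_sum_of_inter_support_eq mu (t := hfinX.toFinset) (by simp), finsum_mem_eq_sum_of_inter_support_eq mu (t := hfinXbar.toFinset) (by simp)]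
  rw [finsum_mem_eq_sum_of_inter_support_eq v (t := hfinX.toFinset) (by simp), finsum_mem_eq_sum_of_inter_support_eq vbar (t := hfinXbar.toFinset) (by simp)] at hscr
  have h1 : ∑ x ∈ hfinX.toFinset, mu x ≤ pstar * ∑ x ∈ hfinX.toFinset, v x := by
    rw [Finset.mul_sum]
    refine Finset.sum_le_sum fun x hx => hopt x ?_
    exact (hfinX.mem_toFinset.mp hx).1
  have h2 : pstar * ∑ x ∈ hfinXbar.toFinset, vbar x = ∑ x ∈ hfinXbar.toFinset, mu x := by
    rw [Finset.mul_sum]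
    refine Finset.sum_congr rfl fun x hx => hperf x ?_
    exact (hfinXbar.mem_toFinset.mp hx).1
  rw [hscr] at h1
  linarith
end

section
/- Peierls condition from a local defect estimate: suppose (i) p⋆·v(x|X) ≥ μ_x for all admissible X, x ∈ X; (ii) there exist δ > 0 and n ≥ 1 such that for every incorrect cell K with X ∩ ⟨K⟩_1 ≠ ∅, some x ∈ X_{⟨K⟩_n} has p⋆·v(x|X) ≥ μ_x + δ; (iii) v(X_{supp Γ}|X) = λ(F∩S)·|supp Γ| and the same identity for the perfect configuration X̄. Then for every contour Γ all of whose cells K satisfy X_{⟨K⟩_1} ≠ ∅, H(X_{supp Γ}|X_{supp Γ^c}) − H(X̄_{supp Γ}|X̄_{supp Γ^c}) ≥ (δ/(2n+1)^d)·|supp Γ|. -/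
open scoped BigOperators

/-- The Peierls condition from a local defect estimate.  If
(i) p⋆·v(x|X) ≥ μ_x for all x ∈ X, (ii) every cell K of supp Γ has a defect
particle x ∈ X_{supp Γ} ∩ ⟨K⟩_n with p⋆·v(x|X) ≥ μ_x + δ, and (iii) the total
allocated volumes over supp Γ equal λ(F∩S)·|supp Γ| for both X and the perfect
configuration X̄ (for which p⋆·v(x|X̄) = μ_x), then
H(X_{supp Γ}|·) − H(X̄_{supp Γ}|·) ≥ (δ/(2n+1)^d)·|supp Γ|. -/
theorem stmt_8
    {P : Type*} (d : ℕ)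
    (cell : P → (Fin d → ℤ))
    (X Xbar : Set P)
    (v vbar mu : P → ℝ) (pstar delta lamF : ℝ)
    (n : ℕ) (hn : 1 ≤ n) (hdelta : 0 < delta) (hpstar : 0 < pstar)
    (hmupos : ∀ x, 0 < mu x)
    (supp : Finset (Fin d → ℤ))                       -- supp Γ
    (hfinX : {x ∈ X | cell x ∈ supp}.Finite)
    (hfinXbar : {x ∈ Xbar | cell x ∈ supp}.Finite)
    -- (i) local optimization
    (hopt : ∀ x ∈ X, mu x ≤ pstar * v x)
    -- the perfect configuration
    (hperf : ∀ x ∈ Xbar, pstar * vbar x = mu x)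
    -- (ii) a defect within ⟨K⟩_n of every cell K of supp Γ, lying in supp Γ
    (hdef : ∀ K ∈ supp, ∃ x ∈ X, cell x ∈ supp ∧ (∀ i, |(cell x - K) i| ≤ (n : ℤ)) ∧
        mu x + delta ≤ pstar * v x)
    -- (iii) the volume identities
    (hvolX : ∑ᶠ x ∈ {x ∈ X | cell x ∈ supp}, v x = lamF * supp.card)
    (hvolXbar : ∑ᶠ x ∈ {x ∈ Xbar | cell x ∈ supp}, vbar x = lamF * supp.card) :
    (delta / (2 * (n : ℝ) + 1) ^ d) * supp.card ≤
      (-∑ᶠ x ∈ {x ∈ X | cell x ∈ supp}, mu x)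
        - (-∑ᶠ x ∈ {x ∈ Xbar | cell x ∈ supp}, mu x) := by
  classical
  rcases supp.eq_empty_or_nonempty with hsupp | ⟨K0, hK0⟩
  · subst hsupp
    simp
  obtain ⟨xP, hxP, -⟩ := hdef K0 hK0
  -- convert finsums to finset sums
  have hcX : {x ∈ X | cell x ∈ supp} = ↑hfinX.toFinset := (hfinX.coe_toFinset).symm
  have hcB : {x ∈ Xbar | cell x ∈ supp} = ↑hfinXbar.toFinset := (hfinXbar.coe_toFinset).symm
  set SX := hfinX.toFinset with hSXdef
  set SB := hfinXbar.toFinset with hSBdef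
  rw [hcX, finsum_mem_coe_finset] at hvolX
  rw [hcB, finsum_mem_coe_finset] at hvolXbar
  rw [hcX, hcB, finsum_mem_coe_finset, finsum_mem_coe_finset]
  have hmemSX : ∀ x, x ∈ SX ↔ x ∈ X ∧ cell x ∈ supp := by
    intro x; simp [hSXdef, Set.Finite.mem_toFinset]
  have hmemSB : ∀ x, x ∈ SB ↔ x ∈ Xbar ∧ cell x ∈ supp := by
    intro x; simp [hSBdef, Set.Finite.mem_toFinset]
  -- sum of mu over SB
  have hBsum : ∑ x ∈ SB, mu x = pstar * (lamF * supp.card) := by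
    rw [← hvolXbar, Finset.mul_sum]
    exact Finset.sum_congr rfl fun x hx => (hperf x ((hmemSB x).1 hx).1).symm
  -- defect choice function
  have hdef' : ∀ K : Fin d → ℤ, K ∈ supp → ∃ x, x ∈ X ∧ cell x ∈ supp ∧
      (∀ i, |(cell x - K) i| ≤ (n : ℤ)) ∧ mu x + delta ≤ pstar * v x := by
    intro K hK; obtain ⟨x, h1, h2, h3, h4⟩ := hdef K hK; exact ⟨x, h1, h2, h3, h4⟩
  set F : (Fin d → ℤ) → P := fun K => if h : K ∈ supp then (hdef' K h).choose else xP with hF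
  have hFspec : ∀ K ∈ supp, F K ∈ X ∧ cell (F K) ∈ supp ∧
      (∀ i, |(cell (F K) - K) i| ≤ (n : ℤ)) ∧ mu (F K) + delta ≤ pstar * v (F K) := by
    intro K hK
    simp only [hF, dif_pos hK]
    exact (hdef' K hK).choose_spec
  set T := supp.image F with hT
  have hTsub : T ⊆ SX := by
    intro x hx
    obtain ⟨K, hK, rfl⟩ := Finset.mem_image.mp hx
    exact (hmemSX _).2 ⟨(hFspec K hK).1, (hFspec K hK).2.1⟩
  -- fiber bound
  have hcard : supp.card ≤ (2 * n + 1) ^ d * T.card := by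
    apply Finset.card_le_mul_card_image
    intro b _
    have hsub : {K ∈ supp | F K = b} ⊆
        Fintype.piFinset (fun i => Finset.Icc (cell b i - n) (cell b i + n)) := by
      intro K hK
      rw [Finset.mem_filter] at hK
      obtain ⟨hK1, hK2⟩ := hK
      have := (hFspec K hK1).2.2.1
      rw [hK2] at this
      rw [Fintype.mem_piFinset]
      intro i
      have hi := this i
      rw [Pi.sub_apply, abs_le] at hi
      rw [Finset.mem_Icc]
      omega
    calc {K ∈ supp | F K = b}.card ≤ _ := Finset.card_le_card hsub
      _ = (2 * n + 1) ^ d := by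
          rw [Fintype.card_piFinset]
          have : ∀ i : Fin d, (Finset.Icc (cell b i - n) (cell b i + n)).card
              = 2 * n + 1 := by
            intro i
            rw [Int.card_Icc]
            omega
          simp only [this]
          rw [Finset.prod_const, Finset.card_univ, Fintype.card_fin]
  -- sum of excess over T
  have hTsum : delta * T.card ≤ ∑ x ∈ T, (pstar * v x - mu x) := by
    have := Finset.card_nsmul_le_sum T (fun x => pstar * v x - mu x) delta ?_
    · rwa [nsmul_eq_mul, mul_comm] at this
    · intro x hx
      obtain ⟨K, hK, rfl⟩ := Finset.mem_image.mp hx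
      have := (hFspec K hK).2.2.2
      show delta ≤ pstar * v (F K) - mu (F K)
      linarith
  have hsubsum : ∑ x ∈ T, (pstar * v x - mu x) ≤ ∑ x ∈ SX, (pstar * v x - mu x) := by
    apply Finset.sum_le_sum_of_subset_of_nonneg hTsub
    intro x hx _
    have := hopt x ((hmemSX x).1 hx).1
    linarith
  have hXsum : ∑ x ∈ SX, (pstar * v x - mu x)
      = pstar * (lamF * supp.card) - ∑ x ∈ SX, mu x := by
    rw [Finset.sum_sub_distrib, ← Finset.mul_sum, hvolX]
  -- put it together
  have hpow : (0:ℝ) < (2 * (n:ℝ) + 1) ^ d := by positivity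
  have hcardR : (supp.card : ℝ) ≤ (2 * (n:ℝ) + 1) ^ d * T.card := by
    exact_mod_cast hcard
  have key : delta / (2 * (n:ℝ) + 1) ^ d * supp.card ≤ delta * T.card := by
    rw [div_mul_eq_mul_div, div_le_iff₀ hpow]
    calc delta * (supp.card : ℝ) ≤ delta * ((2 * (n:ℝ) + 1) ^ d * T.card) := by
          exact mul_le_mul_of_nonneg_left hcardR hdelta.le
      _ = delta * T.card * (2 * (n:ℝ) + 1) ^ d := by ring
  have final : delta / (2 * (n:ℝ) + 1) ^ d * supp.card
      ≤ pstar * (lamF * supp.card) - ∑ x ∈ SX, mu x := by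
    rw [← hXsum]
    linarith
  rw [hBsum] at *
  linarith
end

section
/- In ℤ² with unit squares, consider the hard-core mixture of diamonds T₁ (tetragon with vertices (±1,0),(0,±1)) and octagons T₂ (octagon with vertices (0,−1),(1,−1),(2,0),(2,1),(1,2),(0,2),(−1,1),(−1,0)) placed at lattice sites without overlapping interiors. If a configuration tiles the plane so that every diamond's Voronoi cell has Lebesgue area exactly 2 and every octagon's Voronoi cell has area exactly 7, and the configuration contains at least one octagon, then the configuration is a translate of the truncated square tiling. If it contains no octagon, it is the regular square tiling of the plane by diamonds. -/
open MeasureTheory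
open scoped ENNReal

/-- The diamond T₁: tetragon with vertices (±1,0), (0,±1). -/
noncomputable def diamond : Set (ℝ × ℝ) :=
  convexHull ℝ {((1 : ℝ), (0 : ℝ)), (-1, 0), (0, 1), (0, -1)}

/-- The octagon T₂ with vertices (0,−1),(1,−1),(2,0),(2,1),(1,2),(0,2),(−1,1),(−1,0). -/
noncomputable def octagon : Set (ℝ × ℝ) :=
  convexHull ℝ {((0 : ℝ), (-1 : ℝ)), (1, -1), (2, 0), (2, 1), (1, 2), (0, 2), (-1, 1), (-1, 0)}

/-- Tile shapes: `false` = diamond, `true` = octagon. -/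
noncomputable def tileShape : Bool → Set (ℝ × ℝ) := fun b => if b then octagon else diamond

/-- The tile of a particle (lattice position, shape) placed at its position. -/
noncomputable def placedTile (p : (ℤ × ℤ) × Bool) : Set (ℝ × ℝ) :=
  (fun w => ((p.1.1 : ℝ) + w.1, (p.1.2 : ℝ) + w.2)) '' tileShape p.2

/-- The Voronoi cell of a placed tile with respect to a configuration. -/
noncomputable def vorCell (X : Set ((ℤ × ℤ) × Bool)) (x : (ℤ × ℤ) × Bool) : Set (ℝ × ℝ) :=
  {v : ℝ × ℝ | ∀ y ∈ X, Metric.infDist v (placedTile x) ≤ Metric.infDist v (placedTile y)}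

/-- The truncated square tiling: octagons at 3ℤ × 3ℤ, diamonds at 3ℤ × 3ℤ + (2,2). -/
def truncSquareTiling : Set ((ℤ × ℤ) × Bool) :=
  {p | (p.2 = true ∧ ∃ a b : ℤ, p.1 = (3 * a, 3 * b)) ∨
       (p.2 = false ∧ ∃ a b : ℤ, p.1 = (3 * a + 2, 3 * b + 2))}

/-- The regular square tiling of the plane by diamonds. -/
def diamondTiling : Set ((ℤ × ℤ) × Bool) :=
  {p | p.2 = false ∧ (p.1.1 + p.1.2) % 2 = 0}

/-- Translate of a configuration by a lattice vector. -/
def translateConfig (t : ℤ × ℤ) (Y : Set ((ℤ × ℤ) × Bool)) : Set ((ℤ × ℤ) × Bool) :=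
  (fun p : (ℤ × ℤ) × Bool => ((t.1 + p.1.1, t.2 + p.1.2), p.2)) '' Y

/-!
The configuration is forced by local arguments. If the offset of two placed tiles satisfies an
explicit integer condition, their interiors share a point, so in an admissible configuration
they coincide. Hence, when a point next to a known tile is covered, the covering tile is forced:
every other candidate overlaps a tile already present. Probing at quarter-integer points turns
all of this into integer linear arithmetic. An octagon forces the octagons three steps away
along both axes and the diamonds in the square gaps, i.e. the whole truncated square tiling, and
any further tile would overlap one of its octagons. Without octagons a diamond forces its four
diagonal neighbours, hence the square tiling by diamonds.
-/

lemma le_of_mem_convexHull {S : Set (ℝ × ℝ)} {α β γ : ℝ}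
    (hS : ∀ v ∈ S, α * v.1 + β * v.2 ≤ γ) {v : ℝ × ℝ} (hv : v ∈ convexHull ℝ S) :
    α * v.1 + β * v.2 ≤ γ :=
  convexHull_min hS (convex_halfSpace_le
    ⟨fun _ _ => by simp only [Prod.fst_add, Prod.snd_add]; ring,
      fun _ _ => by simp only [Prod.smul_fst, Prod.smul_snd, smul_eq_mul]; ring⟩ γ) hv

lemma mk_mem_convexHull_of_triangle {S : Set (ℝ × ℝ)} {P Q R : ℝ × ℝ}
    (hP : P ∈ S) (hQ : Q ∈ S) (hR : R ∈ S) {α β γ x y : ℝ} (hα : 0 ≤ α) (hβ : 0 ≤ β)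
    (hγ : 0 ≤ γ) (h : α + β + γ = 1) (hx : x = α * P.1 + β * Q.1 + γ * R.1)
    (hy : y = α * P.2 + β * Q.2 + γ * R.2) : (x, y) ∈ convexHull ℝ S := by
  have := (convex_convexHull ℝ S).sum_mem (t := Finset.univ) (w := ![α, β, γ]) (z := ![P, Q, R])
    (by simp [Fin.forall_fin_succ, hα, hβ, hγ]) (by simpa [Fin.sum_univ_three] using h)
    (by simp [Fin.forall_fin_succ, subset_convexHull ℝ S hP, subset_convexHull ℝ S hQ,
      subset_convexHull ℝ S hR])
  convert this using 1
  ext <;> simp [Fin.sum_univ_three, hx, hy, add_assoc]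

theorem mem_diamond_iff {x y : ℝ} :
    (x, y) ∈ diamond ↔ -1 ≤ x + y ∧ x + y ≤ 1 ∧ -1 ≤ x - y ∧ x - y ≤ 1 := by
  unfold diamond
  constructor
  · intro h
    have e1 := le_of_mem_convexHull (α := 1) (β := 1) (γ := 1) (by norm_num) h
    have e2 := le_of_mem_convexHull (α := -1) (β := -1) (γ := 1) (by norm_num) h
    have e3 := le_of_mem_convexHull (α := 1) (β := -1) (γ := 1) (by norm_num) h
    have e4 := le_of_mem_convexHull (α := -1) (β := 1) (γ := 1) (by norm_num) h
    dsimp only at e1 e2 e3 e4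
    exact ⟨by linarith, by linarith, by linarith, by linarith⟩
  · rintro ⟨h1, h2, h3, h4⟩
    rcases le_total 0 x with hx | hx
    · exact mk_mem_convexHull_of_triangle (P := (1, 0)) (Q := (0, 1)) (R := (0, -1))
        (by simp) (by simp) (by simp) hx (by linarith : 0 ≤ (1 - x + y) / 2)
        (by linarith : 0 ≤ (1 - x - y) / 2) (by ring) (by ring) (by ring)
    · exact mk_mem_convexHull_of_triangle (P := (-1, 0)) (Q := (0, 1))
        (R := (0, -1)) (by simp) (by simp) (by simp) (by linarith : 0 ≤ -x)
        (by linarith : 0 ≤ (1 + x + y) / 2) (by linarith : 0 ≤ (1 + x - y) / 2) (by ring)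
        (by ring) (by ring)

theorem mem_octagon_iff {x y : ℝ} :
    (x, y) ∈ octagon ↔ -1 ≤ x ∧ x ≤ 2 ∧ -1 ≤ y ∧ y ≤ 2 ∧
      -1 ≤ x + y ∧ x + y ≤ 3 ∧ -2 ≤ x - y ∧ x - y ≤ 2 := by
  unfold octagon
  constructor
  · intro h
    have e1 := le_of_mem_convexHull (α := -1) (β := 0) (γ := 1) (by norm_num) h
    have e2 := le_of_mem_convexHull (α := 1) (β := 0) (γ := 2) (by norm_num) h
    have e3 := le_of_mem_convexHull (α := 0) (β := -1) (γ := 1) (by norm_num) h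
    have e4 := le_of_mem_convexHull (α := 0) (β := 1) (γ := 2) (by norm_num) h
    have e5 := le_of_mem_convexHull (α := -1) (β := -1) (γ := 1) (by norm_num) h
    have e6 := le_of_mem_convexHull (α := 1) (β := 1) (γ := 3) (by norm_num) h
    have e7 := le_of_mem_convexHull (α := -1) (β := 1) (γ := 2) (by norm_num) h
    have e8 := le_of_mem_convexHull (α := 1) (β := -1) (γ := 2) (by norm_num) h
    dsimp only at e1 e2 e3 e4 e5 e6 e7 e8
    exact ⟨by linarith, by linarith, by linarith, by linarith, by linarith, by linarith,
      by linarith, by linarith⟩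
  · rintro ⟨h1, h2, h3, h4, h5, h6, h7, h8⟩
    rcases le_total y 0 with hy | hy
    · rcases le_total (x + 2 * y) (-1) with hc | hc
      · exact mk_mem_convexHull_of_triangle (P := (-1, 0)) (Q := (0, -1))
          (R := (1, -1)) (by simp) (by simp) (by simp) (by linarith : 0 ≤ 1 + y)
          (by linarith : 0 ≤ -1 - x - 2 * y) (by linarith : 0 ≤ x + y + 1) (by ring)
          (by ring) (by ring)
      · exact mk_mem_convexHull_of_triangle (P := (-1, 0)) (Q := (1, -1))
          (R := (2, 0)) (by simp) (by simp) (by simp) (by linarith : 0 ≤ (2 + y - x) / 3)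
          (by linarith : 0 ≤ -y) (by linarith : 0 ≤ (x + 1 + 2 * y) / 3) (by ring)
          (by ring) (by ring)
    rcases le_total y 1 with hy' | hy'
    · rcases le_total (x + 1) (3 * y) with hc | hc
      · exact mk_mem_convexHull_of_triangle (P := (-1, 0)) (Q := (2, 1))
          (R := (-1, 1)) (by simp) (by simp) (by simp) (by linarith : 0 ≤ 1 - y)
          (by linarith : 0 ≤ (x + 1) / 3) (by linarith : 0 ≤ y - (x + 1) / 3) (by ring)
          (by ring) (by ring)
      · exact mk_mem_convexHull_of_triangle (P := (-1, 0)) (Q := (2, 0))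
          (R := (2, 1)) (by simp) (by simp) (by simp) (by linarith : 0 ≤ (2 - x) / 3)
          (by linarith : 0 ≤ (x + 1) / 3 - y) hy (by ring) (by ring) (by ring)
    · rcases le_total (x - 2 * y) (-3) with hc | hc
      · exact mk_mem_convexHull_of_triangle (P := (-1, 1)) (Q := (1, 2))
          (R := (0, 2)) (by simp) (by simp) (by simp) (by linarith : 0 ≤ 2 - y)
          (by linarith : 0 ≤ x + 2 - y) (by linarith : 0 ≤ 2 * y - x - 3) (by ring)
          (by ring) (by ring)
      · exact mk_mem_convexHull_of_triangle (P := (-1, 1)) (Q := (2, 1))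
          (R := (1, 2)) (by simp) (by simp) (by simp) (by linarith : 0 ≤ (3 - y - x) / 3)
          (by linarith : 0 ≤ (x - 2 * y + 3) / 3) (by linarith : 0 ≤ y - 1) (by ring)
          (by ring) (by ring)

lemma mem_placedTile_iff {a b : ℤ} {s : Bool} {v : ℝ × ℝ} :
    v ∈ placedTile ((a, b), s) ↔ (v.1 - a, v.2 - b) ∈ tileShape s := by
  constructor
  · rintro ⟨w, hw, rfl⟩
    simpa using hw
  · exact fun h => ⟨_, h, by simp⟩

/-- `InTile s u v` says that `(u / 4, v / 4)` lies in `tileShape s`; at quarter-integer points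
tile membership becomes integer linear arithmetic. -/
def InTile : Bool → ℤ → ℤ → Prop
  | false, u, v => -4 ≤ u + v ∧ u + v ≤ 4 ∧ -4 ≤ u - v ∧ u - v ≤ 4
  | true, u, v => -4 ≤ u ∧ u ≤ 8 ∧ -4 ≤ v ∧ v ≤ 8 ∧ -4 ≤ u + v ∧ u + v ≤ 12 ∧
      -8 ≤ u - v ∧ u - v ≤ 8

lemma div_four_mem_tileShape_iff {s : Bool} {u v : ℤ} :
    ((u : ℝ) / 4, (v : ℝ) / 4) ∈ tileShape s ↔ InTile s u v := by
  cases s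
  · simp only [tileShape, Bool.false_eq_true, ↓reduceIte, mem_diamond_iff, InTile]
    rify
    constructor <;> rintro ⟨h1, h2, h3, h4⟩ <;>
      exact ⟨by linarith, by linarith, by linarith, by linarith⟩
  · simp only [tileShape, ↓reduceIte, mem_octagon_iff, InTile]
    rify
    constructor <;> rintro ⟨h1, h2, h3, h4, h5, h6, h7, h8⟩ <;>
      exact ⟨by linarith, by linarith, by linarith, by linarith, by linarith, by linarith,
        by linarith, by linarith⟩

lemma div_four_mem_placedTile_iff {m n c d : ℤ} {s : Bool} :
    ((m : ℝ) / 4, (n : ℝ) / 4) ∈ placedTile ((c, d), s) ↔ InTile s (m - 4 * c) (n - 4 * d) := by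
  rw [mem_placedTile_iff, ← div_four_mem_tileShape_iff]
  push_cast
  ring_nf

lemma mem_interior_placedTile_false {a b : ℤ} {x y : ℝ}
    (h : -1 < x - a + (y - b) ∧ x - a + (y - b) < 1 ∧ -1 < x - a - (y - b) ∧ x - a - (y - b) < 1) :
    (x, y) ∈ interior (placedTile ((a, b), false)) := by
  let U := {w : ℝ × ℝ | -1 < w.1 - a + (w.2 - b) ∧ w.1 - a + (w.2 - b) < 1 ∧
    -1 < w.1 - a - (w.2 - b) ∧ w.1 - a - (w.2 - b) < 1}
  have hU : IsOpen U := by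
    repeat' apply IsOpen.and
    all_goals exact isOpen_lt (by fun_prop) (by fun_prop)
  refine interior_maximal (fun w hw => ?_) hU (show (x, y) ∈ U from h)
  obtain ⟨h1, h2, h3, h4⟩ := hw
  simp only [mem_placedTile_iff, tileShape, Bool.false_eq_true, ↓reduceIte, mem_diamond_iff]
  exact ⟨h1.le, h2.le, h3.le, h4.le⟩

lemma mem_interior_placedTile_true {a b : ℤ} {x y : ℝ}
    (h : -1 < x - a ∧ x - a < 2 ∧ -1 < y - b ∧ y - b < 2 ∧ -1 < x - a + (y - b) ∧
      x - a + (y - b) < 3 ∧ -2 < x - a - (y - b) ∧ x - a - (y - b) < 2) :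
    (x, y) ∈ interior (placedTile ((a, b), true)) := by
  let U := {w : ℝ × ℝ | -1 < w.1 - a ∧ w.1 - a < 2 ∧ -1 < w.2 - b ∧ w.2 - b < 2 ∧
    -1 < w.1 - a + (w.2 - b) ∧ w.1 - a + (w.2 - b) < 3 ∧ -2 < w.1 - a - (w.2 - b) ∧
    w.1 - a - (w.2 - b) < 2}
  have hU : IsOpen U := by
    repeat' apply IsOpen.and
    all_goals exact isOpen_lt (by fun_prop) (by fun_prop)
  refine interior_maximal (fun w hw => ?_) hU (show (x, y) ∈ U from h)
  obtain ⟨h1, h2, h3, h4, h5, h6, h7, h8⟩ := hw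
  simp only [mem_placedTile_iff, tileShape, ↓reduceIte, mem_octagon_iff]
  exact ⟨h1.le, h2.le, h3.le, h4.le, h5.le, h6.le, h7.le, h8.le⟩

/-- A sufficient integer criterion for two placed tiles to have overlapping interiors: two
octagons whose offset lies in the interior of the doubled octagon, an octagon and a diamond
centred at a lattice point of the octagon, or two diamonds at most one step apart. -/
def Overlap : (ℤ × ℤ) × Bool → (ℤ × ℤ) × Bool → Prop
  | ((a, b), true), ((c, d), true) => -2 ≤ c - a ∧ c - a ≤ 2 ∧ -2 ≤ d - b ∧ d - b ≤ 2 ∧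
      -3 ≤ c - a + (d - b) ∧ c - a + (d - b) ≤ 3 ∧ -3 ≤ c - a - (d - b) ∧ c - a - (d - b) ≤ 3
  | ((a, b), true), ((c, d), false) => InTile true (4 * (c - a)) (4 * (d - b))
  | ((a, b), false), ((c, d), true) => InTile true (4 * (a - c)) (4 * (b - d))
  | ((a, b), false), ((c, d), false) =>
      -1 ≤ c - a + (d - b) ∧ c - a + (d - b) ≤ 1 ∧ -1 ≤ c - a - (d - b) ∧ c - a - (d - b) ≤ 1

-- The witness lies three quarters of the way from the octagon's centre to the diamond's centre.
lemma interior_inter_nonempty_of_inTile {a b c d : ℤ}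
    (h : InTile true (4 * (c - a)) (4 * (d - b))) :
    (interior (placedTile ((a, b), true)) ∩ interior (placedTile ((c, d), false))).Nonempty := by
  obtain ⟨h1, h2, h3, h4, h5, h6, h7, h8⟩ := h
  rify at h1 h2 h3 h4 h5 h6 h7 h8
  exact ⟨((a + 3 * c) / 4 + 1 / 8, (b + 3 * d) / 4 + 1 / 8),
    mem_interior_placedTile_true (by and_intros <;> linarith),
    mem_interior_placedTile_false (by and_intros <;> linarith)⟩

lemma Overlap.interior_inter_nonempty :
    ∀ {p q : (ℤ × ℤ) × Bool}, Overlap p q →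
      (interior (placedTile p) ∩ interior (placedTile q)).Nonempty
  | ((a, b), true), ((c, d), true), ⟨h1, h2, h3, h4, h5, h6, h7, h8⟩ => by
    rify at h1 h2 h3 h4 h5 h6 h7 h8
    exact ⟨((a + c + 1) / 2, (b + d + 1) / 2),
      mem_interior_placedTile_true (by and_intros <;> linarith),
      mem_interior_placedTile_true (by and_intros <;> linarith)⟩
  | ((_, _), true), ((_, _), false), h => interior_inter_nonempty_of_inTile h
  | ((_, _), false), ((_, _), true), h => Set.inter_comm _ _ ▸ interior_inter_nonempty_of_inTile h
  | ((a, b), false), ((c, d), false), ⟨h1, h2, h3, h4⟩ => by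
    rify at h1 h2 h3 h4
    exact ⟨((a + c) / 2, (b + d) / 2),
      mem_interior_placedTile_false (by and_intros <;> linarith),
      mem_interior_placedTile_false (by and_intros <;> linarith)⟩

lemma Overlap.eq {X : Set ((ℤ × ℤ) × Bool)}
    (hadm : X.Pairwise fun p q => Disjoint (interior (placedTile p)) (interior (placedTile q)))
    {p q : (ℤ × ℤ) × Bool} (hp : p ∈ X) (hq : q ∈ X) (h : Overlap p q) : p = q := by
  by_contra hne
  obtain ⟨v, hvp, hvq⟩ := h.interior_inter_nonempty
  exact Set.disjoint_left.mp (hadm hp hq hne) hvp hvq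

lemma exists_mem_placedTile {X : Set ((ℤ × ℤ) × Bool)} (hcover : ⋃ p ∈ X, placedTile p = Set.univ)
    (v : ℝ × ℝ) : ∃ p ∈ X, v ∈ placedTile p := by
  simpa only [← hcover, Set.mem_iUnion₂, exists_prop] using Set.mem_univ v

def IsTiling (X : Set ((ℤ × ℤ) × Bool)) : Prop :=
  X.Pairwise (fun p q => Disjoint (interior (placedTile p)) (interior (placedTile q))) ∧
    ⋃ p ∈ X, placedTile p = Set.univ

lemma mem_of_forced {X K : Set ((ℤ × ℤ) × Bool)}
    (hX : IsTiling X) (hK : K ⊆ X) {t : (ℤ × ℤ) × Bool} (m n : ℤ)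
    (hforced : ∀ r ∈ X, InTile r.2 (m - 4 * r.1.1) (n - 4 * r.1.2) →
      r = t ∨ ∃ q ∈ K, q ≠ r ∧ Overlap q r) : t ∈ X := by
  obtain ⟨⟨⟨c, d⟩, s⟩, hr, hmem⟩ := exists_mem_placedTile hX.2 ((m : ℝ) / 4, (n : ℝ) / 4)
  rcases hforced _ hr (div_four_mem_placedTile_iff.1 hmem) with rfl | ⟨q, hq, hne, hov⟩
  · exact hr
  · exact absurd (hov.eq hX.1 (hK hq) hr) hne

lemma octagon_neighbours_mem {X : Set ((ℤ × ℤ) × Bool)}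
    (hX : IsTiling X) {a b : ℤ} (h : ((a, b), true) ∈ X) :
    ((a + 3, b), true) ∈ X ∧ ((a - 3, b), true) ∈ X ∧
      ((a, b + 3), true) ∈ X ∧ ((a, b - 3), true) ∈ X := by
  have hK : {((a, b), true)} ⊆ X := Set.singleton_subset_iff.2 h
  -- probe just beyond the midpoint of each axis-parallel edge of the octagon
  refine ⟨mem_of_forced hX hK (4 * a + 9) (4 * b + 2) ?_,
    mem_of_forced hX hK (4 * a - 5) (4 * b + 2) ?_,
    mem_of_forced hX hK (4 * a + 2) (4 * b + 9) ?_,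
    mem_of_forced hX hK (4 * a + 2) (4 * b - 5) ?_⟩ <;>
  · rintro ⟨⟨c, d⟩, _ | _⟩ - hr <;> simp [InTile, Overlap] at hr ⊢ <;> omega

lemma octagon_lattice_mem {X : Set ((ℤ × ℤ) × Bool)}
    (hX : IsTiling X) {a b : ℤ} (h : ((a, b), true) ∈ X) (i j : ℤ) :
    ((a + 3 * i, b + 3 * j), true) ∈ X := by
  have step := fun {c d : ℤ} (hcd : ((c, d), true) ∈ X) => octagon_neighbours_mem hX hcd
  have hrow : ((a + 3 * i, b), true) ∈ X := by
    induction i using Int.induction_on with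
    | zero => simpa using h
    | succ i ih => convert (step ih).1 using 3; ring
    | pred i ih => convert (step ih).2.1 using 3; ring
  induction j using Int.induction_on with
  | zero => simpa using hrow
  | succ j ih => convert (step ih).2.2.1 using 3; ring
  | pred j ih => convert (step ih).2.2.2 using 3; ring

lemma diamond_mem_of_octagon_mem {X : Set ((ℤ × ℤ) × Bool)}
    (hX : IsTiling X) {a b : ℤ} (h : ((a, b), true) ∈ X)
    (h' : ((a + 3, b), true) ∈ X) : ((a + 2, b + 2), false) ∈ X :=
  mem_of_forced hX (Set.insert_subset_iff.2 ⟨h, Set.singleton_subset_iff.2 h'⟩)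
    (4 * a + 7) (4 * b + 6)
    (by rintro ⟨⟨c, d⟩, _ | _⟩ - hr <;> simp [InTile, Overlap] at hr ⊢ <;> omega)

lemma diamond_neighbours_mem {X : Set ((ℤ × ℤ) × Bool)}
    (hX : IsTiling X) (hdia : ∀ p ∈ X, p.2 = false) {a b : ℤ}
    (h : ((a, b), false) ∈ X) :
    ((a + 1, b + 1), false) ∈ X ∧ ((a - 1, b - 1), false) ∈ X ∧
      ((a + 1, b - 1), false) ∈ X ∧ ((a - 1, b + 1), false) ∈ X := by
  have hK : {((a, b), false)} ⊆ X := Set.singleton_subset_iff.2 h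
  refine ⟨mem_of_forced hX hK (4 * a + 2) (4 * b + 3) ?_,
    mem_of_forced hX hK (4 * a - 2) (4 * b - 3) ?_,
    mem_of_forced hX hK (4 * a + 2) (4 * b - 3) ?_,
    mem_of_forced hX hK (4 * a - 2) (4 * b + 3) ?_⟩ <;>
  · rintro ⟨⟨c, d⟩, s⟩ hr hin
    obtain rfl : s = false := hdia _ hr
    simp [InTile, Overlap] at hin ⊢
    omega

lemma diamond_lattice_mem {X : Set ((ℤ × ℤ) × Bool)}
    (hX : IsTiling X) (hdia : ∀ p ∈ X, p.2 = false) {a b : ℤ}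
    (h : ((a, b), false) ∈ X) (i j : ℤ) : ((a + i + j, b + i - j), false) ∈ X := by
  have step := fun {c d : ℤ} (hcd : ((c, d), false) ∈ X) =>
    diamond_neighbours_mem hX hdia hcd
  have hdiag : ((a + i, b + i), false) ∈ X := by
    induction i using Int.induction_on with
    | zero => simpa using h
    | succ i ih => convert (step ih).1 using 3 <;> ring
    | pred i ih => convert (step ih).2.1 using 3 <;> ring
  induction j using Int.induction_on with
  | zero => simpa using hdiag
  | succ j ih => convert (step ih).2.2.1 using 3 <;> ring
  | pred j ih => convert (step ih).2.2.2 using 3 <;> ring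

lemma mem_translateConfig_truncSquareTiling_iff {a b c d : ℤ} {s : Bool} :
    ((c, d), s) ∈ translateConfig (a, b) truncSquareTiling ↔
      (s = true ∧ (c - a) % 3 = 0 ∧ (d - b) % 3 = 0) ∨
        (s = false ∧ (c - a) % 3 = 2 ∧ (d - b) % 3 = 2) := by
  simp only [translateConfig, truncSquareTiling, Set.mem_image, Set.mem_ofPred_eq, Prod.exists,
    Prod.mk.injEq]
  constructor
  · rintro ⟨u, v, t, (⟨rfl, i, j, rfl, rfl⟩ | ⟨rfl, i, j, rfl, rfl⟩), ⟨rfl, rfl⟩, rfl⟩ <;> simp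
  · rintro (⟨rfl, hc, hd⟩ | ⟨rfl, hc, hd⟩)
    · exact ⟨c - a, d - b, true, Or.inl ⟨rfl, (c - a) / 3, (d - b) / 3, by omega, by omega⟩,
        ⟨by omega, by omega⟩, rfl⟩
    · exact ⟨c - a, d - b, false, Or.inr ⟨rfl, (c - a) / 3, (d - b) / 3, by omega, by omega⟩,
        ⟨by omega, by omega⟩, rfl⟩

lemma mem_translateConfig_diamondTiling_iff {a b c d : ℤ} {s : Bool} :
    ((c, d), s) ∈ translateConfig (a, b) diamondTiling ↔ s = false ∧ (c - a + (d - b)) % 2 = 0 := by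
  simp only [translateConfig, diamondTiling, Set.mem_image, Set.mem_ofPred_eq, Prod.exists,
    Prod.mk.injEq]
  constructor
  · rintro ⟨u, v, t, ⟨rfl, h⟩, ⟨rfl, rfl⟩, rfl⟩
    simpa using h
  · rintro ⟨rfl, h⟩
    exact ⟨c - a, d - b, false, ⟨rfl, by omega⟩, ⟨by omega, by omega⟩, rfl⟩

theorem eq_translateConfig_truncSquareTiling {X : Set ((ℤ × ℤ) × Bool)}
    (hX : IsTiling X) {a b : ℤ} (h : ((a, b), true) ∈ X) :
    X = translateConfig (a, b) truncSquareTiling := by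
  have hoct := octagon_lattice_mem hX h
  ext ⟨⟨c, d⟩, s⟩
  rw [mem_translateConfig_truncSquareTiling_iff]
  constructor
  · intro hr
    by_contra hpat
    -- a tile off the pattern overlaps the nearest octagon of the lattice
    have hov :
        Overlap ((a + 3 * ((c - a + 1) / 3), b + 3 * ((d - b + 1) / 3)), true) ((c, d), s) := by
      cases s <;> simp [Overlap, InTile] at hpat ⊢ <;> omega
    have := hov.eq hX.1 (hoct _ _) hr
    cases s
    · simp at this
    · simp at this hpat
      omega
  · rintro (⟨rfl, hc, hd⟩ | ⟨rfl, hc, hd⟩)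
    · obtain ⟨i, rfl⟩ : ∃ i, c = a + 3 * i := ⟨(c - a) / 3, by omega⟩
      obtain ⟨j, rfl⟩ : ∃ j, d = b + 3 * j := ⟨(d - b) / 3, by omega⟩
      exact hoct i j
    · obtain ⟨i, rfl⟩ : ∃ i, c = a + 3 * i + 2 := ⟨(c - a) / 3, by omega⟩
      obtain ⟨j, rfl⟩ : ∃ j, d = b + 3 * j + 2 := ⟨(d - b) / 3, by omega⟩
      refine diamond_mem_of_octagon_mem hX (hoct i j) ?_
      convert hoct (i + 1) j using 3
      ring

theorem eq_translateConfig_diamondTiling {X : Set ((ℤ × ℤ) × Bool)}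
    (hX : IsTiling X) (hdia : ∀ p ∈ X, p.2 = false) {a b : ℤ}
    (h : ((a, b), false) ∈ X) : X = translateConfig (a, b) diamondTiling := by
  have hlat := diamond_lattice_mem hX hdia h
  ext ⟨⟨c, d⟩, s⟩
  rw [mem_translateConfig_diamondTiling_iff]
  constructor
  · intro hr
    obtain rfl := hdia _ hr
    refine ⟨rfl, ?_⟩
    by_contra hodd
    obtain ⟨i, j, hi, hj⟩ : ∃ i j, c + 1 = a + i + j ∧ d = b + i - j :=
      ⟨(c + 1 - a + (d - b)) / 2, (c + 1 - a - (d - b)) / 2, by omega, by omega⟩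
    have hov : Overlap ((c + 1, d), false) ((c, d), false) := by simp [Overlap]
    simpa using hov.eq hX.1 (hi ▸ hj ▸ hlat i j) hr
  · rintro ⟨rfl, hpar⟩
    obtain ⟨i, j, rfl, rfl⟩ : ∃ i j, c = a + i + j ∧ d = b + i - j :=
      ⟨(c - a + (d - b)) / 2, (c - a - (d - b)) / 2, by omega, by omega⟩
    exact hlat i j

theorem stmt_11_general
    (X : Set ((ℤ × ℤ) × Bool))
    -- admissibility: pairwise disjoint interiors
    (hadm : X.Pairwise fun p q => Disjoint (interior (placedTile p)) (interior (placedTile q)))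
    -- X tiles the plane
    (hcover : ⋃ p ∈ X, placedTile p = Set.univ) :
    ((∃ p ∈ X, p.2 = true) → ∃ t : ℤ × ℤ, X = translateConfig t truncSquareTiling) ∧
    ((∀ p ∈ X, p.2 = false) → ∃ t : ℤ × ℤ, X = translateConfig t diamondTiling) := by
  have hX : IsTiling X := ⟨hadm, hcover⟩
  refine ⟨fun ⟨⟨⟨a, b⟩, s⟩, hp, hs⟩ => ?_, fun hdia => ?_⟩
  · obtain rfl : s = true := hs
    exact ⟨(a, b), eq_translateConfig_truncSquareTiling hX hp⟩
  · obtain ⟨⟨⟨a, b⟩, s⟩, hp, -⟩ := exists_mem_placedTile hX.2 0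
    obtain rfl : s = false := hdia _ hp
    exact ⟨(a, b), eq_translateConfig_diamondTiling hX hdia hp⟩

/-- In the diamond–octagon mixture on ℤ², any configuration that
tiles the plane with every diamond's Voronoi cell of area exactly 2 and every
octagon's Voronoi cell of area exactly 7 is a translate of the truncated square
tiling if it contains an octagon, and is the regular square tiling by diamonds
otherwise. -/
theorem stmt_11
    (X : Set ((ℤ × ℤ) × Bool))
    -- admissibility: pairwise disjoint interiors
    (hadm : X.Pairwise fun p q => Disjoint (interior (placedTile p)) (interior (placedTile q)))
    -- X tiles the plane
    (hcover : ⋃ p ∈ X, placedTile p = Set.univ)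
    -- every Voronoi cell has area exactly that of its tile (2 or 7)
    (hvor : ∀ p ∈ X, volume (vorCell X p) = if p.2 then (7 : ℝ≥0∞) else 2) :
    ((∃ p ∈ X, p.2 = true) → ∃ t : ℤ × ℤ, X = translateConfig t truncSquareTiling) ∧
    ((∀ p ∈ X, p.2 = false) → ∃ t : ℤ × ℤ, X = translateConfig t diamondTiling) :=
  stmt_11_general X hadm hcover
end

section
/- Compactness argument for defect localization: suppose the allocated volume v is translation invariant and lower semi-continuous, p⋆·v(x|X) ≥ μ_x always holds, and the perfect configurations are exactly those X̄ with p⋆·v(x|X̄) = μ_x for all x ∈ X̄. If the space of admissible configurations is sequentially compact under local convergence, then there exist δ > 0 and n ≥ 1 such that for every admissible X with respect to which the cell F is incorrect (X does not agree with any perfect configuration on the 3^d-neighborhood ⟨F⟩₁), either X ∩ ⟨F⟩₁ = ∅ or there exists x ∈ X_{⟨F⟩_n} with p⋆·v(x|X) ≥ μ_x + δ. -/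
open Filter

/-- Compactness argument for defect localization.  With a
translation-invariant, lower semi-continuous allocated volume satisfying
p⋆·v(x|X) ≥ μ_x, perfect configurations being exactly the nonempty ones
achieving equality everywhere, and the space of admissible configurations
sequentially compact under local convergence, there exist δ > 0 and n ≥ 1 such
that whenever the central cell F is incorrect with respect to X, either
X ∩ ⟨F⟩₁ = ∅ or some x ∈ X_{⟨F⟩_n} has p⋆·v(x|X) ≥ μ_x + δ. -/
theorem stmt_13
    {d : ℕ} {Ω P : Type*}
    (mem : P → Ω → Prop)                       -- x ∈ X
    (cell : P → (Fin d → ℤ))                   -- cell of a particle (F = cell 0)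
    (v : P → Ω → ℝ) (mu : P → ℝ) (hmupos : ∀ x, 0 < mu x)
    (pstar : ℝ) (hpstar : 0 < pstar)
    (conv : (ℕ → Ω) → Ω → Prop)                -- local convergence
    (Perfect : Ω → Prop)
    (hPerfect : ∀ X, Perfect X ↔ ((∃ x, mem x X) ∧ ∀ x, mem x X → pstar * v x X = mu x))
    -- local optimization
    (hopt : ∀ X x, mem x X → mu x ≤ pstar * v x X)
    -- sequential compactness of the configuration space
    (hcompact : ∀ X : ℕ → Ω, ∃ (Y : Ω) (s : ℕ → ℕ), StrictMono s ∧ conv (X ∘ s) Y)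
    -- lower semi-continuity of v along local convergence
    (hlsc : ∀ (Xn : ℕ → Ω) (X : Ω), conv Xn X → ∀ x, mem x X →
      (∀ᶠ m in atTop, mem x (Xn m)) ∧ v x X ≤ liminf (fun m => v x (Xn m)) atTop)
    -- local convergence gives eventual agreement on finite cell regions
    (hlocal : ∀ (Xn : ℕ → Ω) (X : Ω), conv Xn X → ∀ A : Set (Fin d → ℤ), A.Finite →
      ∀ᶠ m in atTop, {x | mem x (Xn m) ∧ cell x ∈ A} = {x | mem x X ∧ cell x ∈ A}) :
    ∃ δ > (0 : ℝ), ∃ n ≥ 1, ∀ X : Ω,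
      -- F incorrect: X agrees with no perfect configuration on ⟨F⟩₁
      ¬ (∃ Xbar, Perfect Xbar ∧
          {x | mem x X ∧ ∀ i, |cell x i| ≤ 1} = {x | mem x Xbar ∧ ∀ i, |cell x i| ≤ 1}) →
      ({x | mem x X ∧ ∀ i, |cell x i| ≤ 1} = ∅ ∨
        ∃ x, mem x X ∧ (∀ i, |cell x i| ≤ (n : ℤ)) ∧ mu x + δ ≤ pstar * v x X) := by
  by_contra hcon
  push_neg at hcon
  choose X hX1 hX2 hX3 using fun n : ℕ =>
    hcon (1/((n:ℝ)+1)) (by positivity) (n+1) (by omega)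
  obtain ⟨Y, s, hs, hconv⟩ := hcompact X
  set A : Set (Fin d → ℤ) := {c | ∀ i, |c i| ≤ 1} with hA
  have hAfin : A.Finite := by
    have : A ⊆ Set.pi Set.univ (fun _ : Fin d => Set.Icc (-1 : ℤ) 1) := by
      intro c hc i _
      exact abs_le.mp (hc i)
    exact (Set.Finite.pi fun _ => Set.finite_Icc _ _).subset this
  have hloc := hlocal (X ∘ s) Y hconv A hAfin
  -- Y is perfect
  have hYperf : Perfect Y := by
    rw [hPerfect]
    constructor
    · obtain ⟨m, hm⟩ := hloc.exists
      obtain ⟨x, hx1, hx2⟩ := hX2 (s m)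
      have : x ∈ {x | mem x Y ∧ cell x ∈ A} := by
        rw [← hm]; exact ⟨hx1, hx2⟩
      exact ⟨x, this.1⟩
    · intro x hx
      refine le_antisymm ?_ (hopt Y x hx)
      obtain ⟨hmem, hliminf⟩ := hlsc (X ∘ s) Y hconv x hx
      set f : ℕ → ℝ := fun m => v x (X (s m)) with hf
      have hbdd : IsBoundedUnder (· ≥ ·) atTop f := by
        refine ⟨mu x / pstar, ?_⟩
        rw [eventually_map]
        refine hmem.mono fun m hm => ?_
        show mu x / pstar ≤ f m
        rw [div_le_iff₀ hpstar]
        calc mu x ≤ pstar * v x (X (s m)) := hopt _ _ hm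
          _ = f m * pstar := by rw [mul_comm]
      have key : ∀ ε > (0:ℝ), pstar * v x Y ≤ mu x + ε := by
        intro ε hε
        have hNε : ∃ M : ℕ, 1/((M:ℝ)+1) ≤ ε := by
          obtain ⟨M, hM⟩ := exists_nat_gt (1/ε)
          refine ⟨M, ?_⟩
          rw [div_le_iff₀ (by positivity)]
          rw [div_lt_iff₀ hε] at hM
          nlinarith
        obtain ⟨M, hM⟩ := hNε
        set N : ℕ := Finset.univ.sup (fun i => (cell x i).natAbs) with hN
        have hev : ∀ᶠ m in atTop, f m ≤ (mu x + ε) / pstar := by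
          filter_upwards [hmem, eventually_ge_atTop (max N M)] with m hm1 hm2
          have hsm : max N M ≤ s m := le_trans hm2 (hs.le_apply)
          have hcell : ∀ i, |cell x i| ≤ ((s m + 1 : ℕ) : ℤ) := by
            intro i
            have h1 : (cell x i).natAbs ≤ N :=
              Finset.le_sup (f := fun i => (cell x i).natAbs) (Finset.mem_univ i)
            have h2 : (cell x i).natAbs ≤ s m + 1 := by omega
            calc |cell x i| = ((cell x i).natAbs : ℤ) := (Int.abs_eq_natAbs _)
              _ ≤ ((s m + 1 : ℕ) : ℤ) := by exact_mod_cast h2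
          have h3 := hX3 (s m) x hm1 hcell
          have hsmall : 1/((s m : ℝ)+1) ≤ ε := by
            have hMs : (M:ℝ) + 1 ≤ (s m : ℝ) + 1 := by
              have : M ≤ s m := le_trans (le_max_right _ _) hsm
              exact_mod_cast Nat.add_le_add_right this 1
            calc 1/((s m : ℝ)+1) ≤ 1/((M:ℝ)+1) := by
                  apply one_div_le_one_div_of_le (by positivity) hMs
              _ ≤ ε := hM
          rw [le_div_iff₀ hpstar, mul_comm]
          refine le_of_lt ?_
          calc pstar * f m < mu x + 1/((s m : ℝ)+1) := h3
            _ ≤ mu x + ε := by linarith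
        have hlim : liminf f atTop ≤ (mu x + ε) / pstar :=
          liminf_le_of_frequently_le hev.frequently hbdd
        have hvY : v x Y ≤ (mu x + ε) / pstar := le_trans hliminf hlim
        calc pstar * v x Y ≤ pstar * ((mu x + ε)/pstar) :=
              mul_le_mul_of_nonneg_left hvY hpstar.le
          _ = mu x + ε := by field_simp
      by_contra hlt
      push_neg at hlt
      exact absurd (key ((pstar * v x Y - mu x)/2) (by linarith)) (by linarith)
  -- contradiction with incorrectness
  obtain ⟨m, hm⟩ := hloc.exists
  refine hX1 (s m) Y hYperf ?_
  have heq : {x | mem x (X (s m)) ∧ ∀ i, |cell x i| ≤ 1}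
      = {x | mem x ((X ∘ s) m) ∧ cell x ∈ A} := rfl
  rw [heq, hm]
  rfl
end
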